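/- arXiv:1412.7270 — 5 statements merged into one kernel-verified Lean document; each statement's English description precedes it below -/
import Mathlib

section
/- Let F = Σ_{s=1}^r u^{s,1}⊗u^{s,2}⊗...⊗u^{s,m} with (u^{s,j})_0 = 1 for all s and all j ≥ 2. Let U_1 be the r×r matrix whose s-th column is the first r entries (u^{s,1})_{0:r-1} of u^{s,1}. If U_1 is invertible, then there exists a matrix G ∈ C^{[r-1]×J} (where J consists of triples τ=(i,j,k) with 0≤i≤r−1, 2≤j≤m, 1≤k≤n_j−1) such that for every τ=(i,j,k) ∈ J and every multi-linear monomial μ in the variables other than the 1st and j-th groups, Σ_{ℓ=0}^{r−1} F_{x_{1,ℓ}·μ} G(ℓ,τ) = F_{x_{1,i}·x_{j,k}·μ}; i.e., G is a generating matrix for F. -/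
/-- Existence of a generating matrix. Let `F = Σ_{s} u^{s,1} ⊗ ⋯ ⊗ u^{s,m}`
with `(u^{s,j})₀ = 1` for `j ≥ 2`, and suppose the `r×r` matrix `U₁` of the first
`r` entries of the `u^{s,1}` is invertible. Then there is a matrix `G` such that
for every `τ = (i,j,k)` and every multilinear monomial `μ` avoiding groups `1` and `j`,
`Σ_ℓ F_{x_{1,ℓ}·μ} G(ℓ,τ) = F_{x_{1,i}·x_{j,k}·μ}`, i.e. `G` is a generating matrix for `F`. -/
theorem stmt4 {m r : ℕ} [NeZero m] {n : Fin m → ℕ} (hr : r ≤ n 0 + 1)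
    (u : Fin r → (j : Fin m) → Fin (n j + 1) → ℂ)
    (hnorm : ∀ s, ∀ j : Fin m, j ≠ 0 → u s j 0 = 1)
    (F : ((j : Fin m) → Fin (n j + 1)) → ℂ)
    (hF : ∀ idx, F idx = ∑ s : Fin r, ∏ j : Fin m, u s j (idx j))
    (hU1 : IsUnit (Matrix.of fun ℓ s : Fin r => u s 0 (Fin.castLE hr ℓ)).det) :
    ∃ G : Fin r → Fin r → (j : Fin m) → (k : Fin (n j + 1)) → ℂ,
      ∀ (i : Fin r) (j : Fin m), j ≠ 0 → ∀ k : Fin (n j + 1), k ≠ 0 →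
        ∀ μ : (j' : Fin m) → Fin (n j' + 1),
          (∑ ℓ : Fin r,
            F (Function.update (Function.update μ j 0) 0 (Fin.castLE hr ℓ)) * G ℓ i j k)
          = F (Function.update (Function.update μ j k) 0 (Fin.castLE hr i)) := by
  set M : Matrix (Fin r) (Fin r) ℂ := Matrix.of fun ℓ s : Fin r => u s 0 (Fin.castLE hr ℓ) with hM
  refine ⟨fun ℓ i j k => ∑ t, M⁻¹ t ℓ * (u t 0 (Fin.castLE hr i) * u t j k), ?_⟩
  intro i j hj k hk μ
  have hδ : ∀ t s : Fin r, (∑ ℓ, M⁻¹ t ℓ * M ℓ s) = if t = s then 1 else 0 := by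
    intro t s
    have := congrFun (congrFun (Matrix.nonsing_inv_mul M hU1) t) s
    simpa [Matrix.mul_apply, Matrix.one_apply] using this
  have key : ∀ (s : Fin r) (a : Fin (n 0 + 1)) (b : Fin (n j + 1)),
      (∏ j', u s j' (Function.update (Function.update μ j b) 0 a j'))
        = u s 0 a * (u s j b * ∏ j' ∈ (Finset.univ.erase 0).erase j, u s j' (μ j')) := by
    intro s a b
    rw [← Finset.mul_prod_erase Finset.univ _ (Finset.mem_univ (0 : Fin m))]
    rw [Function.update_self]
    congr 1
    rw [← Finset.mul_prod_erase _ _ (Finset.mem_erase.mpr ⟨hj, Finset.mem_univ j⟩)]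
    congr 1
    · rw [Function.update_of_ne hj, Function.update_self]
    · refine Finset.prod_congr rfl fun j' hj' => ?_
      simp only [Finset.mem_erase] at hj'
      rw [Function.update_of_ne hj'.2.1, Function.update_of_ne hj'.1]
  simp only [hF, key]
  simp only [hnorm _ j hj, one_mul]
  set P : Fin r → ℂ := fun s => ∏ j' ∈ (Finset.univ.erase 0).erase j, u s j' (μ j') with hP
  set v : Fin r → ℂ := fun t => u t 0 (Fin.castLE hr i) * u t j k with hv
  have step1 : (∑ ℓ : Fin r, (∑ s, u s 0 (Fin.castLE hr ℓ) * P s) * ∑ t, M⁻¹ t ℓ * v t)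
      = ∑ s, ∑ t, (P t * v s) * ∑ ℓ, M⁻¹ s ℓ * M ℓ t := by
    simp only [Finset.sum_mul, Finset.mul_sum]
    rw [Finset.sum_comm]
    refine Finset.sum_congr rfl fun s _ => ?_
    rw [Finset.sum_comm]
    refine Finset.sum_congr rfl fun t _ => ?_
    refine Finset.sum_congr rfl fun ℓ _ => ?_
    simp only [hM, Matrix.of_apply]
    ring
  rw [step1]
  simp only [hδ, mul_ite, mul_one, mul_zero]
  simp only [Finset.sum_ite_eq, Finset.mem_univ, if_true]
  refine Finset.sum_congr rfl fun s _ => ?_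
  simp only [hv]
  ring
end

section
/- Suppose N_1, ..., N_k are r×r complex matrices that are simultaneously diagonalizable via a common invertible matrix P, and the linear combination M = Σ ξ_i N_i (for fixed scalars ξ_i) has r distinct eigenvalues. If Q*MQ = T is a Schur decomposition of M with Q = [q_1 ... q_r] unitary, then each matrix Q* N_j Q is upper triangular, and for each s the vector (q_s* N_1 q_s, ..., q_s* N_k q_s) equals (D_1(σ(s),σ(s)), ..., D_k(σ(s),σ(s))) for some permutation σ, where D_j = P^{-1} N_j P are the diagonalizations. -/
open Matrix Polynomial

section Aux

variable {n : Type*} [Fintype n] [DecidableEq n]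

/-- Conjugation by an invertible matrix as an algebra homomorphism. -/
noncomputable def conjAH (P : Matrix n n ℂ) (hP : IsUnit P.det) :
    Matrix n n ℂ →ₐ[ℂ] Matrix n n ℂ where
  toFun A := P⁻¹ * A * P
  map_one' := by show P⁻¹ * 1 * P = 1; rw [mul_one, Matrix.nonsing_inv_mul _ hP]
  map_mul' A B := by
    show P⁻¹ * (A * B) * P = P⁻¹ * A * P * (P⁻¹ * B * P)
    simp only [Matrix.mul_assoc]
    rw [Matrix.mul_nonsing_inv_cancel_left _ _ hP]
  map_zero' := by show P⁻¹ * 0 * P = 0; simp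
  map_add' A B := by show P⁻¹ * (A + B) * P = _; noncomm_ring
  commutes' c := by
    show P⁻¹ * algebraMap ℂ (Matrix n n ℂ) c * P = _
    simp [Algebra.algebraMap_eq_smul_one, Matrix.mul_smul, Matrix.smul_mul,
      Matrix.nonsing_inv_mul _ hP]

theorem aeval_conj (P A : Matrix n n ℂ) (hP : IsUnit P.det) (f : ℂ[X]) :
    aeval (P⁻¹ * A * P) f = P⁻¹ * aeval A f * P :=
  aeval_algHom_apply (conjAH P hP) A f

theorem conj_inj_aux (P : Matrix n n ℂ) (hP : IsUnit P.det) {A B : Matrix n n ℂ}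
    (h : P⁻¹ * A * P = P⁻¹ * B * P) : A = B := by
  have h2 := congrArg (fun X => P * X * P⁻¹) h
  simpa only [Matrix.mul_assoc, Matrix.mul_nonsing_inv_cancel_left _ _ hP,
    Matrix.mul_nonsing_inv _ hP, mul_one] using h2

theorem aeval_diag (d : n → ℂ) (f : ℂ[X]) :
    aeval (Matrix.diagonal d) f = Matrix.diagonal fun s => f.eval (d s) := by
  have h1 : Matrix.diagonal d = Matrix.diagonalAlgHom ℂ d := rfl
  rw [h1, aeval_algHom_apply]
  simp only [diagonalAlgHom_apply]
  have h2 : (aeval d f : n → ℂ) = fun s => f.eval (d s) := by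
    funext s
    rw [aeval_fn_apply, ← coe_aeval_eq_eval]
  rw [h2]

theorem charpoly_conj' (P A : Matrix n n ℂ) (hP : IsUnit P.det) :
    (P⁻¹ * A * P).charpoly = A.charpoly := by
  have hc : ∀ B : Matrix n n ℂ[X], Matrix.scalar n (X : ℂ[X]) * B = B * Matrix.scalar n X :=
    fun B => (Matrix.scalar_commute (X : ℂ[X]) (fun r' => Commute.all X r') B).eq
  have hmap1 : (1 : Matrix n n ℂ).map (C : ℂ →+* ℂ[X]) = 1 :=
    Matrix.map_one _ (map_zero C) (map_one C)
  have key : charmatrix (P⁻¹ * A * P) =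
      (P⁻¹).map C * A.charmatrix * P.map C := by
    unfold charmatrix
    simp only [RingHom.mapMatrix_apply]
    rw [mul_sub, sub_mul, ← hc, Matrix.mul_assoc (Matrix.scalar n X), ← Matrix.map_mul,
      Matrix.nonsing_inv_mul _ hP, hmap1, mul_one, ← Matrix.map_mul, ← Matrix.map_mul]
  unfold Matrix.charpoly
  rw [key, det_mul, det_mul, mul_comm, ← mul_assoc, ← det_mul, ← Matrix.map_mul,
    Matrix.mul_nonsing_inv _ hP, hmap1, det_one, one_mul]

variable [LinearOrder n]

theorem bt_pow {T : Matrix n n ℂ} (hT : T.BlockTriangular id) (m : ℕ) :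
    (T ^ m).BlockTriangular id := by
  induction m with
  | zero => simpa using Matrix.blockTriangular_one
  | succ m ih => rw [pow_succ]; exact ih.mul hT

theorem bt_algebraMap (a : ℂ) :
    (algebraMap ℂ (Matrix n n ℂ) a).BlockTriangular id := by
  rw [Matrix.algebraMap_eq_diagonal]
  exact Matrix.blockTriangular_diagonal _

theorem bt_aeval {T : Matrix n n ℂ} (hT : T.BlockTriangular id) (f : ℂ[X]) :
    (aeval T f).BlockTriangular id := by
  induction f using Polynomial.induction_on' with
  | add p q hp hq => rw [map_add]; exact hp.add hq
  | monomial m a => rw [aeval_monomial]; exact (bt_algebraMap a).mul (bt_pow hT m)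

theorem bt_mul_diag {A B : Matrix n n ℂ} (hA : A.BlockTriangular id)
    (hB : B.BlockTriangular id) (s : n) : (A * B) s s = A s s * B s s := by
  rw [Matrix.mul_apply]
  apply Finset.sum_eq_single
  · intro u _ hu
    rcases lt_or_gt_of_ne hu with h | h
    · rw [hA (show (id u : n) < id s from h), zero_mul]
    · rw [hB (show (id s : n) < id u from h), mul_zero]
  · intro h; exact absurd (Finset.mem_univ s) h

theorem bt_pow_diag {T : Matrix n n ℂ} (hT : T.BlockTriangular id) (m : ℕ) (s : n) :
    (T ^ m) s s = (T s s) ^ m := by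
  induction m with
  | zero => simp [Matrix.one_apply]
  | succ m ih => rw [pow_succ, pow_succ, bt_mul_diag (bt_pow hT m) hT, ih]

theorem bt_aeval_diag {T : Matrix n n ℂ} (hT : T.BlockTriangular id) (f : ℂ[X]) (s : n) :
    (aeval T f) s s = f.eval (T s s) := by
  induction f using Polynomial.induction_on' with
  | add p q hp hq => rw [map_add, Matrix.add_apply, hp, hq, eval_add]
  | monomial m a =>
      rw [aeval_monomial, eval_monomial, bt_mul_diag (bt_algebraMap a) (bt_pow hT m),
        bt_pow_diag hT m]
      simp [Matrix.algebraMap_eq_diagonal]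

end Aux

/-- If `N₁, …, N_k` are simultaneously diagonalized by `P` (`P⁻¹ N_j P = diag (D j)`)
and `M = Σ ξ_j N_j` has `r` distinct eigenvalues, then for any Schur decomposition
`Qᴴ M Q = T`, each `Qᴴ N_j Q` is upper triangular, and for each `s` the vector
`(q_s* N_1 q_s, …, q_s* N_k q_s)` equals `(D_1(σ s), …, D_k(σ s))` for some
permutation `σ`. -/
theorem stmt9 {r k : ℕ} (N : Fin k → Matrix (Fin r) (Fin r) ℂ)
    (P : Matrix (Fin r) (Fin r) ℂ) (hP : IsUnit P.det)
    (D : Fin k → Fin r → ℂ)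
    (hdiag : ∀ j, P⁻¹ * N j * P = Matrix.diagonal (D j))
    (ξ : Fin k → ℂ)
    (hdist : Function.Injective fun s : Fin r => ∑ j, ξ j * D j s)
    (Q T : Matrix (Fin r) (Fin r) ℂ)
    (hQ : Q ∈ Matrix.unitaryGroup (Fin r) ℂ)
    (hT : T.BlockTriangular id)
    (hSchur : Qᴴ * (∑ j, ξ j • N j) * Q = T) :
    (∀ j, (Qᴴ * N j * Q).BlockTriangular id) ∧
    ∃ σ : Equiv.Perm (Fin r), ∀ (s : Fin r) (j : Fin k),
      (Qᴴ * N j * Q) s s = D j (σ s) := by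
  classical
  set lam : Fin r → ℂ := fun s => ∑ j, ξ j * D j s with hlamdef
  set M : Matrix (Fin r) (Fin r) ℂ := ∑ j, ξ j • N j with hMdef
  have hQ1 : Qᴴ * Q = 1 := by
    have h := hQ.1
    rwa [Matrix.star_eq_conjTranspose] at h
  have hQdet : IsUnit Q.det := Matrix.isUnit_det_of_left_inverse hQ1
  have hQinv : Q⁻¹ = Qᴴ := Matrix.inv_eq_left_inv hQ1
  -- `M` is diagonalized by `P`
  have hMP : P⁻¹ * M * P = Matrix.diagonal lam := by
    have h1 : P⁻¹ * M * P = ∑ j, ξ j • (P⁻¹ * N j * P) := by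
      simp [hMdef, Finset.mul_sum, Finset.sum_mul, Matrix.mul_smul, Matrix.smul_mul]
    rw [h1]
    simp only [hdiag]
    ext i j
    by_cases h : i = j
    · subst h
      simp [Matrix.sum_apply, lam]
    · simp [Matrix.sum_apply, Matrix.diagonal_apply_ne _ h]
  have hTM : T = Q⁻¹ * M * Q := by rw [hQinv, ← hSchur]
  -- Lagrange interpolation polynomials
  have hinjOn : Set.InjOn lam ↑(Finset.univ : Finset (Fin r)) := fun a _ b _ h => hdist h
  set f : Fin k → ℂ[X] := fun j => Lagrange.interpolate Finset.univ lam (D j) with hfdef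
  have hNj : ∀ j, Qᴴ * N j * Q = Polynomial.aeval T (f j) := by
    intro j
    have e1 : Polynomial.aeval (Matrix.diagonal lam) (f j) = Matrix.diagonal (D j) := by
      rw [aeval_diag]
      have hfun : (fun s => Polynomial.eval (lam s) (f j)) = D j := by
        funext s
        exact Lagrange.eval_interpolate_at_node (D j) hinjOn (Finset.mem_univ s)
      rw [hfun]
    have e2 : P⁻¹ * Polynomial.aeval M (f j) * P = P⁻¹ * N j * P := by
      rw [← aeval_conj P M hP, hMP, e1, hdiag j]
    have e3 : Polynomial.aeval M (f j) = N j := conj_inj_aux P hP e2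
    rw [hTM, aeval_conj Q M hQdet, e3, hQinv]
  constructor
  · intro j
    rw [hNj j]
    exact bt_aeval hT (f j)
  -- equality of characteristic polynomials
  have hTcp : ∏ t : Fin r, (X - C (T t t)) = ∏ u : Fin r, (X - C (lam u)) := by
    have h1 : T.charpoly = ∏ t : Fin r, (X - C (T t t)) :=
      Matrix.charpoly_of_upperTriangular T hT
    have h2 : (Matrix.diagonal lam).charpoly = ∏ u : Fin r, (X - C (lam u)) := by
      rw [Matrix.charpoly_of_upperTriangular _ (Matrix.blockTriangular_diagonal lam)]
      simp [Matrix.diagonal_apply_eq]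
    have h3 : T.charpoly = M.charpoly := by rw [hTM]; exact charpoly_conj' Q M hQdet
    have h4 : (Matrix.diagonal lam).charpoly = M.charpoly := by
      rw [← hMP]; exact charpoly_conj' P M hP
    rw [← h1, ← h2, h3, h4]
  -- from equal products of distinct linear factors to a multiset equality
  have hmult : (Finset.univ.val.map fun t : Fin r => T t t) = Finset.univ.val.map lam := by
    rw [Finset.prod_eq_multiset_prod, Finset.prod_eq_multiset_prod] at hTcp
    have e1 : ((Finset.univ.val.map fun t : Fin r => T t t).map fun a => X - C a).prod
        = ((Finset.univ.val.map lam).map fun a => X - C a).prod := by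
      simpa only [Multiset.map_map, Function.comp_def] using hTcp
    have e2 := congrArg Polynomial.roots e1
    rwa [Polynomial.roots_multiset_prod_X_sub_C, Polynomial.roots_multiset_prod_X_sub_C] at e2
  have hnd : (Finset.univ.val.map fun t : Fin r => T t t).Nodup := by
    rw [hmult]
    exact Finset.univ.nodup.map hdist
  have hTdiag_inj : ∀ a b : Fin r, T a a = T b b → a = b := fun a b h =>
    Multiset.inj_on_of_nodup_map hnd a (Finset.mem_val.mpr (Finset.mem_univ a))
      b (Finset.mem_val.mpr (Finset.mem_univ b)) h
  have hex : ∀ s : Fin r, ∃ u, lam u = T s s := by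
    intro s
    have hm : T s s ∈ Finset.univ.val.map lam := by
      rw [← hmult]
      exact Multiset.mem_map_of_mem _ (Finset.mem_val.mpr (Finset.mem_univ s))
    obtain ⟨u, _, hu⟩ := Multiset.mem_map.mp hm
    exact ⟨u, hu⟩
  choose σ' hσ' using hex
  have hσinj : Function.Injective σ' := by
    intro a b h
    exact hTdiag_inj a b ((hσ' a).symm.trans (h ▸ hσ' b))
  have hbij := Finite.injective_iff_bijective.mp hσinj
  refine ⟨Equiv.ofBijective σ' hbij, ?_⟩
  intro s j
  rw [hNj j, bt_aeval_diag hT (f j) s]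
  show Polynomial.eval (T s s) (f j) = D j ((Equiv.ofBijective σ' hbij) s)
  rw [Equiv.ofBijective_apply, ← hσ' s]
  exact Lagrange.eval_interpolate_at_node (D j) hinjOn (Finset.mem_univ (σ' s))
end

section
/- Let F = λ v^{⊗m} + E ∈ S^m(C^n) with v = (1, a_1, ..., a_{n−1}), λ ≠ 0, and ‖E‖ = ε. For j ∈ {1,...,n−1}, let a_j(ε) be the minimizer of the least squares problem min_w Σ_{i_2,...,i_m} |F_{1,i_2,...,i_m} w − F_{j+1,i_2,...,i_m}|². Then |a_j(ε) − a_j| = O(ε) as ε → 0, with the constant depending only on λ and v. -/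
/-!
Write `x = (F_{1,γ})_γ` and `y = (F_{j+1,γ})_γ`. Then `a_j(ε) - a_j = ⟪x, y - a_j x⟫ / ‖x‖²`, so
by Cauchy–Schwarz `|a_j(ε) - a_j| ≤ ‖y - a_j x‖ / ‖x‖`. The rank-one part cancels in `y - a_j x`,
which is therefore a combination of two slices of `E` and has norm at most `(1 + |a_j|) ε`. The
rank-one part of `x` is `λ (∏_t v_{γ_t})_γ`, of norm at least `|λ|` (its entry at `γ = 0` is `λ`),
so `‖x‖ ≥ |λ| / 2` once `ε ≤ |λ| / 2`.
-/

open Finset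

section LeastSquares

variable {𝕜 E : Type*} [RCLike 𝕜] [NormedAddCommGroup E] [InnerProductSpace 𝕜 E]

theorem norm_inner_div_norm_sq_sub_le {x : E} (hx : x ≠ 0) (y : E) (c : 𝕜) :
    ‖inner 𝕜 x y / ((‖x‖ ^ 2 : ℝ) : 𝕜) - c‖ ≤ ‖y - c • x‖ / ‖x‖ := by
  have hx' : ‖x‖ ≠ 0 := norm_ne_zero_iff.mpr hx
  have key : inner 𝕜 x y / ((‖x‖ ^ 2 : ℝ) : 𝕜) - c
      = inner 𝕜 x (y - c • x) / ((‖x‖ ^ 2 : ℝ) : 𝕜) := by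
    rw [inner_sub_right, inner_smul_right, inner_self_eq_norm_sq_to_K, sub_div,
      mul_div_assoc]
    push_cast
    rw [div_self (by exact_mod_cast pow_ne_zero 2 hx'), mul_one]
  calc ‖inner 𝕜 x y / ((‖x‖ ^ 2 : ℝ) : 𝕜) - c‖
      = ‖inner 𝕜 x (y - c • x)‖ / ‖x‖ ^ 2 := by
        rw [key, norm_div, RCLike.norm_ofReal, abs_of_nonneg (by positivity)]
    _ ≤ ‖x‖ * ‖y - c • x‖ / ‖x‖ ^ 2 := by gcongr; exact norm_inner_le_norm _ _
    _ = ‖y - c • x‖ / ‖x‖ := by field_simp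

end LeastSquares

theorem norm_div_two_le_norm_smul_add {𝕜 E : Type*} [NormedField 𝕜] [SeminormedAddCommGroup E]
    [NormedSpace 𝕜 E] {c : 𝕜} {p e : E} (hp : 1 ≤ ‖p‖) (he : ‖e‖ ≤ ‖c‖ / 2) :
    ‖c‖ / 2 ≤ ‖c • p + e‖ := by
  have : ‖c‖ ≤ ‖c • p‖ := by
    rw [norm_smul]; exact le_mul_of_one_le_right (norm_nonneg _) hp
  have := norm_sub_norm_le (c • p) (-e)
  rw [sub_neg_eq_add, norm_neg] at this
  linarith

section FrontSlice

variable {𝕜 ι : Type*} [RCLike 𝕜] {m : ℕ}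

/-- The vectors `a_j`, `b_j` of the least squares problem are `frontSlice F 0`, `frontSlice F j.succ`. -/
def frontSlice (F : (Fin (m + 1) → ι) → 𝕜) (i : ι) : EuclideanSpace 𝕜 (Fin m → ι) :=
  WithLp.toLp 2 fun γ => F (Fin.cons i γ)

theorem norm_frontSlice_le [Fintype ι] (F : (Fin (m + 1) → ι) → 𝕜) (i : ι) :
    ‖frontSlice F i‖ ≤ ‖WithLp.toLp 2 F‖ := by
  rw [EuclideanSpace.norm_eq, EuclideanSpace.norm_eq]
  exact Real.sqrt_le_sqrt <|
    (sum_map univ ⟨_, Fin.cons_right_injective i⟩ fun idx => ‖F idx‖ ^ 2).symm.le.trans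
      (sum_le_univ_sum_of_nonneg fun _ => sq_nonneg _)

theorem frontSlice_rankOne_add (c : 𝕜) (v : ι → 𝕜) (E : (Fin (m + 1) → ι) → 𝕜) (i : ι) :
    frontSlice (fun idx => c * ∏ t, v (idx t) + E idx) i
      = (c * v i) • WithLp.toLp 2 (fun γ : Fin m → ι => ∏ t, v (γ t)) + frontSlice E i := by
  ext γ
  simp [frontSlice, Fin.prod_univ_succ, mul_assoc]

theorem one_le_norm_prod_of_eq_one [Fintype ι] {v : ι → 𝕜} {i₀ : ι} (hv : v i₀ = 1) :
    1 ≤ ‖WithLp.toLp 2 (fun γ : Fin m → ι => ∏ t, v (γ t))‖ := by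
  simpa [hv] using PiLp.norm_apply_le (WithLp.toLp 2 (fun γ : Fin m → ι => ∏ t, v (γ t)))
    fun _ => i₀

theorem inner_frontSlice [Fintype ι] (F : (Fin (m + 1) → ι) → 𝕜) (i k : ι) :
    inner 𝕜 (frontSlice F i) (frontSlice F k)
      = ∑ γ : Fin m → ι, starRingEnd 𝕜 (F (Fin.cons i γ)) * F (Fin.cons k γ) := by
  simp [frontSlice, PiLp.inner_apply, mul_comm]

theorem norm_frontSlice_sq [Fintype ι] (F : (Fin (m + 1) → ι) → 𝕜) (i : ι) :
    ‖frontSlice F i‖ ^ 2 = ∑ γ : Fin m → ι, ‖F (Fin.cons i γ)‖ ^ 2 := by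
  simp [frontSlice, EuclideanSpace.norm_sq_eq]

theorem frontSlice_rankOne_add_sub_smul (c : 𝕜) {v : ι → 𝕜} (E : (Fin (m + 1) → ι) → 𝕜)
    {i : ι} (hv : v i = 1) (k : ι) :
    frontSlice (fun idx => c * ∏ t, v (idx t) + E idx) k
        - v k • frontSlice (fun idx => c * ∏ t, v (idx t) + E idx) i
      = frontSlice E k - v k • frontSlice E i := by
  rw [frontSlice_rankOne_add, frontSlice_rankOne_add, hv]
  module

end FrontSlice

/-- Let `F = λ v^{⊗m} + E` with `v = (1, a₁, …, a_{n−1})`, `λ ≠ 0` and `‖E‖ = ε`.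
For each `j`, the minimizer `a_j(ε)` of the scalar least squares problem
`min_w Σ |F_{1,i₂,…,i_m} w − F_{j+1,i₂,…,i_m}|²`, namely
`a_j(ε) = (a_j^* b_j)/(a_j^* a_j)`, satisfies `|a_j(ε) − a_j| = O(ε)` as `ε → 0`,
with the constant depending only on `λ` and `v`. -/
theorem stmt12 {n m : ℕ} (lam : ℂ) (hlam : lam ≠ 0)
    (a : Fin n → ℂ) (v : Fin (n + 1) → ℂ)
    (hv0 : v 0 = 1) (hva : ∀ j : Fin n, v j.succ = a j) :
    ∃ δ > (0 : ℝ), ∃ C > (0 : ℝ),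
      ∀ (F E : (Fin (m + 1) → Fin (n + 1)) → ℂ) (ε : ℝ),
        (∀ idx, F idx = lam * ∏ t, v (idx t) + E idx) →
        Real.sqrt (∑ idx, ‖E idx‖ ^ 2) = ε → ε ≤ δ →
        ∀ j : Fin n,
          ‖(∑ γ : Fin m → Fin (n + 1),
                (starRingEnd ℂ) (F (Fin.cons 0 γ)) * F (Fin.cons j.succ γ)) /
              ((∑ γ : Fin m → Fin (n + 1),
                ‖F (Fin.cons 0 γ)‖ ^ 2 : ℝ) : ℂ) - a j‖ ≤ C * ε := by
  have hlam' : 0 < ‖lam‖ := norm_pos_iff.mpr hlam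
  refine ⟨‖lam‖ / 2, by positivity, 2 * (1 + ∑ k, ‖a k‖) / ‖lam‖, by positivity, ?_⟩
  intro F E ε hF hε hεδ j
  have hε0 : 0 ≤ ε := hε ▸ Real.sqrt_nonneg _
  have hF' : F = fun idx => lam * ∏ t, v (idx t) + E idx := funext hF
  have hE (i : Fin (n + 1)) : ‖frontSlice E i‖ ≤ ε :=
    hε ▸ (norm_frontSlice_le E i).trans (EuclideanSpace.norm_eq _).le
  have hx : ‖lam‖ / 2 ≤ ‖frontSlice F 0‖ := by
    rw [hF', frontSlice_rankOne_add, hv0, mul_one]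
    exact norm_div_two_le_norm_smul_add (one_le_norm_prod_of_eq_one hv0) ((hE 0).trans hεδ)
  have hres : ‖frontSlice F j.succ - a j • frontSlice F 0‖ ≤ (1 + ‖a j‖) * ε := by
    rw [hF', ← hva, frontSlice_rankOne_add_sub_smul lam E hv0, hva]
    calc _ ≤ ‖frontSlice E j.succ‖ + ‖a j‖ * ‖frontSlice E 0‖ := by
          grw [norm_sub_le, norm_smul]
      _ ≤ ε + ‖a j‖ * ε := by gcongr <;> apply hE
      _ = (1 + ‖a j‖) * ε := by ring
  have haj : 1 + ‖a j‖ ≤ 1 + ∑ k, ‖a k‖ := by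
    gcongr; exact single_le_sum (fun k _ => norm_nonneg (a k)) (mem_univ j)
  rw [← inner_frontSlice, ← norm_frontSlice_sq]
  calc _ ≤ ‖frontSlice F j.succ - a j • frontSlice F 0‖ / ‖frontSlice F 0‖ :=
        norm_inner_div_norm_sq_sub_le (norm_pos_iff.mp (by linarith)) _ _
    _ ≤ (1 + ‖a j‖) * ε / (‖lam‖ / 2) := by gcongr
    _ = 2 * (1 + ‖a j‖) / ‖lam‖ * ε := by field_simp
    _ ≤ 2 * (1 + ∑ k, ‖a k‖) / ‖lam‖ * ε := by gcongr
end

section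
/- Let v_1, ..., v_r ∈ C^n be vectors whose truncations to the first r monomial evaluations [v_i]_{B_0} are linearly independent, where B_0 is the set of the first r monomials in graded lexicographic order. Then the symmetric tensors v_1^{⊗m}, ..., v_r^{⊗m} are linearly independent in S^m(C^n), provided m ≥ deg of the largest monomial in B_0 and the v_i are pairwise non-proportional with first coordinate 1. -/
/-!
Every monomial `x^β` in the tail coordinates with `|β| ≤ m` is a coordinate of `v^{⊗m}`: pad it
with `m - |β|` copies of the coordinate `0`, which equals `1` on every `vᵢ`. Hence a linear
relation among the `vᵢ^{⊗m}` restricts, on the coordinates indexed by `B_0`, to the same relation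
among the `[vᵢ]_{B_0}`, which forces it to be trivial.
-/

open Finset

theorem Multiset.exists_fin_map_univ_eq {α : Type*} {m : ℕ} (μ : Multiset α) (h : μ.card = m) :
    ∃ idx : Fin m → α, univ.val.map idx = μ := by
  subst h
  refine ⟨fun s => μ.toList.get (s.cast μ.length_toList.symm), ?_⟩
  rw [Fin.univ_val_map, ← List.ofFn_congr μ.length_toList, List.ofFn_get, Multiset.coe_toList]

/-- The monomial `∏ j, x_{j+1} ^ β j` homogenized to degree `m` by the coordinate `0`. -/
def monomialMultiset {q : ℕ} (m : ℕ) (β : Fin q → ℕ) : Multiset (Fin (q + 1)) :=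
  Multiset.replicate (m - ∑ j, β j) 0 + ∑ j, Multiset.replicate (β j) j.succ

theorem card_monomialMultiset {q m : ℕ} {β : Fin q → ℕ} (h : ∑ j, β j ≤ m) :
    (monomialMultiset m β).card = m := by
  simp only [monomialMultiset, Multiset.card_add, Multiset.card_replicate, Multiset.card_sum]
  omega

theorem prod_map_monomialMultiset {M : Type*} [CommMonoid M] {q : ℕ} (m : ℕ) (β : Fin q → ℕ)
    {f : Fin (q + 1) → M} (hf : f 0 = 1) :
    ((monomialMultiset m β).map f).prod = ∏ j, f j.succ ^ β j := by
  rw [monomialMultiset, ← Multiset.coe_mapAddMonoidHom, map_add, map_sum]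
  simp [Multiset.prod_sum, hf]

theorem exists_index_prod_eq_monomial {q m : ℕ} {β : Fin q → ℕ} (h : ∑ j, β j ≤ m) :
    ∃ idx : Fin m → Fin (q + 1), ∀ {M : Type*} [CommMonoid M] (f : Fin (q + 1) → M), f 0 = 1 →
      ∏ s, f (idx s) = ∏ j, f j.succ ^ β j := by
  obtain ⟨idx, hidx⟩ := (monomialMultiset m β).exists_fin_map_univ_eq (card_monomialMultiset h)
  refine ⟨idx, fun f hf => ?_⟩
  rw [← prod_map_monomialMultiset m β hf, ← hidx, Multiset.map_map]
  rfl

theorem stmt15_general {q r m : ℕ} (v : Fin r → Fin (q + 1) → ℂ)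
    (hv0 : ∀ i, v i 0 = 1)
    (B : Fin r → Fin q → ℕ)
    (hBdeg : ∀ t, (∑ j, B t j) ≤ m)
    (hli : LinearIndependent ℂ fun i : Fin r =>
      fun t : Fin r => ∏ j : Fin q, (v i j.succ) ^ (B t j)) :
    LinearIndependent ℂ fun i : Fin r =>
      fun idx : Fin m → Fin (q + 1) => ∏ t, v i (idx t) := by
  rw [Fintype.linearIndependent_iff] at hli ⊢
  refine fun g hg => hli g (funext fun t => ?_)
  obtain ⟨idx, hidx⟩ := exists_index_prod_eq_monomial (hBdeg t)
  have hmon : ∀ i, ∏ s, v i (idx s) = ∏ j, v i j.succ ^ B t j := fun i => hidx (v i) (hv0 i)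
  simpa [hmon] using congrFun hg idx

/-- Let `v₁, …, v_r ∈ ℂ^n` have first coordinate `1`, be pairwise non-proportional,
and suppose the evaluations of the first `r` monomials (in graded lexicographic
order, all of degree `≤ m`) at the tails of the `vᵢ` are linearly independent.
Then the symmetric tensors `v₁^{⊗m}, …, v_r^{⊗m}` are linearly independent. -/
theorem stmt15 {q r m : ℕ} (v : Fin r → Fin (q + 1) → ℂ)
    (hv0 : ∀ i, v i 0 = 1)
    (hprop : ∀ i i', i ≠ i' → ∀ c : ℂ, v i ≠ c • v i')
    (B : Fin r → Fin q → ℕ)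
    (hBinj : Function.Injective B)
    (hBdeg : ∀ t, (∑ j, B t j) ≤ m)
    -- `B` enumerates an initial segment of the graded lexicographic order:
    -- any monomial strictly earlier than some `B t` is also in the range of `B`.
    (hBinit : ∀ (t : Fin r) (β : Fin q → ℕ),
      ((∑ j, β j) < (∑ j, B t j) ∨
        ((∑ j, β j) = (∑ j, B t j) ∧
          ∃ i : Fin q, (∀ j, j < i → β j = B t j) ∧ B t i < β i)) →
      ∃ t', B t' = β)
    (hli : LinearIndependent ℂ fun i : Fin r =>
      fun t : Fin r => ∏ j : Fin q, (v i j.succ) ^ (B t j)) :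
    LinearIndependent ℂ fun i : Fin r =>
      fun idx : Fin m → Fin (q + 1) => ∏ t, v i (idx t) :=
  stmt15_general v hv0 B hBdeg hli
end

section
/- Let ε ≥ 0 and let the hypotheses of Theorem 5.2 hold: F = X^{bs} + E with ‖E‖ = ε, X^{bs} = Σ_{s=1}^r u^{s,1}⊗...⊗u^{s,m} normalized so (u^{s,j})_0 = 1 for j ≥ 2; the families {(u^{s,1})_{0:r−1}} and {u^{s,2}⊗...⊗u^{s,m}} are each linearly independent; each coefficient matrix A[X^{bs},j] has full column rank; the tuple is scaling-optimal; and the scalars Σ_{(0,j,k)} ξ_{j,k}(u^{s,j})_k are pairwise distinct over s. If ε = 0 (i.e., rank F = r), then the tensor X^{gp} produced by Algorithm 5.1 equals F, giving a rank decomposition of F. -/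
/-!
For exact data `F = X^{bs}`, the least-squares system defining `G` is solvable, so its minimizer
solves it exactly. Writing `W` for the first-mode factors truncated to `r` rows and `P_j` for the
matrix of the remaining outer products, `A[X^{bs},j] = P_j W`; full column rank of `A[X^{bs},j]`
makes `P_j` injective, which turns the exact equations into `M̂^{j,k} Wᵀ = Wᵀ diag(u^{s,j}_k)`.
So all `M̂^{j,k}`, and hence `M̂(ξ)`, are diagonalized by `Wᵀ`, and `M̂(ξ)` has the distinct
eigenvalues `Λ_s = Σ ξ_{j,k} (u^{s,j})_k`. In the Schur basis, `S = Q* Wᵀ` satisfies `T S = S diag Λ`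
with `T` upper triangular, and distinct eigenvalues force `S` to be upper triangular up to a
column permutation `σ`. Then `Q* M̂^{j,k} Q` is triangular with diagonal `u^{σ t,j}_k`, i.e.
`v̂^{t,j} = u^{σ t,j}`, and the first-mode vectors `u^{σ t,1}` reproduce `F` exactly, so the
least-squares first-mode vectors do as well.
-/

open Matrix Finset

noncomputable section

/-- Index set of a tensor in `ℂ^{(n₀+1) × ⋯ × (n_{m−1}+1)}`. -/
abbrev TIdx (m : ℕ) (n : Fin m → ℕ) := (j : Fin m) → Fin (n j + 1)

/-- The (Hilbert–Schmidt) norm of a tensor. -/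
noncomputable def tnorm {m : ℕ} {n : Fin m → ℕ} (X : TIdx m n → ℂ) : ℝ :=
  Real.sqrt (∑ idx : TIdx m n, ‖X idx‖ ^ 2)

/-- The least squares objective of (5.9): `Σ_{τ=(i,j,k)} ‖A[F,j] G(:,τ) − b[F,τ]‖²`. -/
noncomputable def gobj {m r : ℕ} [NeZero m] {n : Fin m → ℕ} (hr : r ≤ n 0 + 1)
    (F : TIdx m n → ℂ)
    (G : Fin r → Fin r → (j : Fin m) → Fin (n j + 1) → ℂ) : ℝ :=
  ∑ i : Fin r, ∑ j ∈ univ.filter (fun j : Fin m => j ≠ 0),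
    ∑ k ∈ univ.filter (fun k : Fin (n j + 1) => k ≠ 0),
      ∑ μ ∈ univ.filter (fun μ : TIdx m n => μ 0 = 0 ∧ μ j = 0),
        ‖(∑ ℓ : Fin r,
            G ℓ i j k * F (Function.update μ 0 (Fin.castLE hr ℓ))) -
          F (Function.update (Function.update μ 0 (Fin.castLE hr i)) j k)‖ ^ 2

/-- The matrix `M̂^{j,k}` built from `G`: its `(i,ℓ)` entry is `G(ℓ,(i,j,k))`. -/
def Mhat {m r : ℕ} {n : Fin m → ℕ}
    (G : Fin r → Fin r → (j : Fin m) → Fin (n j + 1) → ℂ)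
    (j : Fin m) (k : Fin (n j + 1)) : Matrix (Fin r) (Fin r) ℂ :=
  Matrix.of fun i ℓ => G ℓ i j k

/-- The vectors `v̂^{s,j} = (1, q_s^* M̂^{j,1} q_s, …, q_s^* M̂^{j,n_j−1} q_s)`. -/
noncomputable def vhat {m r : ℕ} {n : Fin m → ℕ}
    (G : Fin r → Fin r → (j : Fin m) → Fin (n j + 1) → ℂ)
    (Q : Matrix (Fin r) (Fin r) ℂ)
    (s : Fin r) (j : Fin m) (k : Fin (n j + 1)) : ℂ :=
  if k = 0 then 1 else (Qᴴ * Mhat G j k * Q) s s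


theorem tnorm_eq_zero_iff {m : ℕ} {n : Fin m → ℕ} {X : TIdx m n → ℂ} : tnorm X = 0 ↔ X = 0 := by
  rw [tnorm, ← EuclideanSpace.norm_eq (WithLp.toLp 2 X), norm_eq_zero, WithLp.toLp_eq_zero]

theorem tnorm_nonneg {m : ℕ} {n : Fin m → ℕ} (X : TIdx m n → ℂ) : 0 ≤ tnorm X :=
  Real.sqrt_nonneg _

theorem eq_of_tnorm_sub_le {m : ℕ} {n : Fin m → ℕ} {X Y F : TIdx m n → ℂ}
    (h : tnorm (fun idx => X idx - F idx) ≤ tnorm (fun idx => Y idx - F idx)) (hY : Y = F) :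
    X = F := by
  subst hY
  simp only [sub_self] at h
  rw [← sub_eq_zero, ← tnorm_eq_zero_iff]
  exact le_antisymm (h.trans_eq (tnorm_eq_zero_iff.mpr rfl)) (tnorm_nonneg _)

theorem exists_last_ne_zero {ι M : Type*} [Fintype ι] [LinearOrder ι] [Zero M] {v : ι → M}
    (hv : v ≠ 0) : ∃ i, v i ≠ 0 ∧ ∀ j, i < j → v j = 0 := by
  classical
  have hs : (univ.filter fun i => v i ≠ 0).Nonempty := by
    simpa [Finset.filter_nonempty_iff, funext_iff] using hv
  refine ⟨_, (mem_filter.mp (max'_mem _ hs)).2, fun j hj => ?_⟩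
  by_contra hj0
  exact (le_max' _ j (mem_filter.mpr ⟨mem_univ j, hj0⟩)).not_gt hj

theorem mul_mul_mul_eq_of_mul_eq {M : Type*} [Monoid M] {q p a x d : M} (hqp : q * p = 1)
    (h : a * x = x * d) : p * a * q * (p * x) = p * x * d :=
  calc p * a * q * (p * x) = p * a * (q * p) * x := by simp only [mul_assoc]
    _ = p * x * d := by rw [hqp, mul_one, mul_assoc, h, mul_assoc]

namespace Matrix

theorem mulVec_injective_of_rank_eq {κ ι K : Type*} [Fintype κ] [Fintype ι] [Field K]
    (A : Matrix κ ι K) (h : A.rank = Fintype.card ι) : Function.Injective A.mulVec := by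
  rw [mulVec_injective_iff, linearIndependent_iff_card_eq_finrank_span, ← h,
    rank_eq_finrank_span_cols]
  rfl

theorem BlockTriangular.mul_apply_self {ι R : Type*} [Fintype ι] [LinearOrder ι]
    [NonUnitalNonAssocSemiring R] {X Y : Matrix ι ι R} (hX : X.BlockTriangular id)
    (hY : Y.BlockTriangular id) (i : ι) : (X * Y) i i = X i i * Y i i := by
  rw [mul_apply, sum_eq_single i (fun j _ hji => ?_) (by simp)]
  rcases hji.lt_or_gt with hj | hj
  · rw [hX hj, zero_mul]
  · rw [hY hj, mul_zero]

variable {ι K : Type*} [Fintype ι] [LinearOrder ι] [Field K]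

theorem BlockTriangular.apply_self_eq_of_mulVec_eq_smul {T : Matrix ι ι K}
    (hT : T.BlockTriangular id) {v : ι → K} {c : K} (hTv : T *ᵥ v = c • v) {i : ι}
    (hvi : v i ≠ 0) (hv : ∀ j, i < j → v j = 0) : T i i = c := by
  have h := congrFun hTv i
  rw [mulVec, dotProduct, sum_eq_single i (fun j _ hji => ?_) (by simp)] at h
  · exact mul_right_cancel₀ hvi (by simpa using h)
  · rcases hji.lt_or_gt with hj | hj
    · rw [hT hj, zero_mul]
    · rw [hv j hj, mul_zero]

theorem BlockTriangular.apply_self_eq_of_mul_eq_mul_diagonal {S B : Matrix ι ι K}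
    (hS : S.BlockTriangular id) (hSu : IsUnit S) {d : ι → K} (hB : B * S = S * diagonal d)
    (i : ι) : B i i = d i := by
  have hdet := (isUnit_iff_isUnit_det S).mp hSu
  have hSinv : S⁻¹.BlockTriangular id := by
    have := hSu.invertible
    exact blockTriangular_inv_of_blockTriangular hS
  have hB' : B = S * diagonal d * S⁻¹ := by
    rw [← hB, Matrix.mul_assoc, mul_nonsing_inv _ hdet, Matrix.mul_one]
  have hdiag_inv : S i i * S⁻¹ i i = 1 := by
    rw [← hS.mul_apply_self hSinv, mul_nonsing_inv _ hdet, one_apply_eq]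
  rw [hB', (hS.mul (blockTriangular_diagonal d)).mul_apply_self hSinv,
    hS.mul_apply_self (blockTriangular_diagonal d), diagonal_apply_eq]
  linear_combination d i * hdiag_inv

theorem exists_perm_blockTriangular_submatrix {T S : Matrix ι ι K} (hT : T.BlockTriangular id)
    (hS : IsUnit S) {c : ι → K} (hc : Function.Injective c) (hTS : T * S = S * diagonal c) :
    ∃ σ : Equiv.Perm ι, (S.submatrix id σ).BlockTriangular id := by
  have hcol : ∀ s, S.col s ≠ 0 := (linearIndependent_cols_iff_isUnit.mpr hS).ne_zero
  choose p hp hbelow using fun s => exists_last_ne_zero (hcol s)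
  have heigvec : ∀ s, T *ᵥ S.col s = c s • S.col s := fun s => by
    ext i
    have := congrFun₂ hTS i s
    rw [mul_diagonal, mul_apply] at this
    simp [mulVec, dotProduct, this, mul_comm]
  have hdiag : ∀ s, T (p s) (p s) = c s := fun s =>
    hT.apply_self_eq_of_mulVec_eq_smul (heigvec s) (hp s) (hbelow s)
  have hbij : Function.Bijective p := Finite.injective_iff_bijective.mp fun a b hab =>
    hc (by rw [← hdiag a, ← hdiag b, hab])
  refine ⟨(Equiv.ofBijective p hbij).symm, fun a b hba => hbelow _ a ?_⟩
  rwa [Equiv.ofBijective_apply_symm_apply p hbij]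

theorem exists_perm_apply_self_eq_of_mul_eq_mul_diagonal {T S : Matrix ι ι K}
    (hT : T.BlockTriangular id) (hS : IsUnit S) {c : ι → K} (hc : Function.Injective c)
    (hTS : T * S = S * diagonal c) :
    ∃ σ : Equiv.Perm ι, ∀ (d : ι → K) (B : Matrix ι ι K), B * S = S * diagonal d →
      ∀ i, B i i = d (σ i) := by
  obtain ⟨σ, hσ⟩ := exists_perm_blockTriangular_submatrix hT hS hc hTS
  have hσu : IsUnit (S.submatrix id σ) := by
    rw [isUnit_iff_isUnit_det, det_permute']
    exact ((Equiv.Perm.sign σ).isUnit.map (Int.castRingHom K)).mul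
      ((isUnit_iff_isUnit_det S).mp hS)
  refine ⟨σ, fun d B hB => hσ.apply_self_eq_of_mul_eq_mul_diagonal hσu ?_⟩
  have := congrArg (fun M => M.submatrix id σ) hB
  rwa [submatrix_mul B S id id σ Function.bijective_id, submatrix_mul _ _ _ _ _ σ.bijective,
    submatrix_id_id, submatrix_diagonal_equiv] at this

end Matrix

section

variable {m r : ℕ} [NeZero m] {n : Fin m → ℕ}

def tailProd (u : Fin r → (j : Fin m) → Fin (n j + 1) → ℂ) (s : Fin r) (μ : TIdx m n) : ℂ :=
  ∏ j ∈ univ.filter (fun j : Fin m => j ≠ 0), u s j (μ j)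

def firstModeMat (hr : r ≤ n 0 + 1) (u : Fin r → (j : Fin m) → Fin (n j + 1) → ℂ) :
    Matrix (Fin r) (Fin r) ℂ :=
  Matrix.of fun s ℓ => u s 0 (Fin.castLE hr ℓ)

/-- The matrix `A[X^{bs}, j]` of the rank hypothesis. -/
def coeffMat (hr : r ≤ n 0 + 1) (u : Fin r → (j : Fin m) → Fin (n j + 1) → ℂ) (j : Fin m) :
    Matrix {μ : TIdx m n // μ 0 = 0 ∧ μ j = 0} (Fin r) ℂ :=
  Matrix.of fun μ ℓ => ∑ s : Fin r, ∏ j' : Fin m,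
    u s j' (Function.update (μ : TIdx m n) 0 (Fin.castLE hr ℓ) j')

def tailMat (u : Fin r → (j : Fin m) → Fin (n j + 1) → ℂ) (j : Fin m) :
    Matrix {μ : TIdx m n // μ 0 = 0 ∧ μ j = 0} (Fin r) ℂ :=
  Matrix.of fun μ s => tailProd u s μ

variable (hr : r ≤ n 0 + 1) {u : Fin r → (j : Fin m) → Fin (n j + 1) → ℂ}

theorem prod_eq_mul_tailProd (s : Fin r) (μ : TIdx m n) :
    ∏ j, u s j (μ j) = u s 0 (μ 0) * tailProd u s μ := by
  rw [tailProd, filter_ne', mul_prod_erase _ (fun j => u s j (μ j)) (mem_univ 0)]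

theorem tailProd_update_zero (s : Fin r) (μ : TIdx m n) (x : Fin (n 0 + 1)) :
    tailProd u s (Function.update μ 0 x) = tailProd u s μ :=
  prod_congr rfl fun j hj => by rw [Function.update_of_ne (mem_filter.mp hj).2]

theorem tailProd_update {j : Fin m} (hj : j ≠ 0) (s : Fin r) {μ : TIdx m n}
    (hμ : u s j (μ j) = 1) (k : Fin (n j + 1)) :
    tailProd u s (Function.update μ j k) = u s j k * tailProd u s μ := by
  have hmem : j ∈ univ.filter (fun j : Fin m => j ≠ 0) := mem_filter.mpr ⟨mem_univ j, hj⟩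
  rw [tailProd, tailProd, ← mul_prod_erase _ _ hmem, ← mul_prod_erase _ _ hmem, hμ, one_mul,
    Function.update_self]
  congr 1
  exact prod_congr rfl fun i hi => by rw [Function.update_of_ne (ne_of_mem_erase hi)]

theorem coeffMat_eq_tailMat_mul (j : Fin m) :
    coeffMat hr u j = tailMat u j * firstModeMat hr u := by
  ext μ ℓ
  simp [coeffMat, tailMat, firstModeMat, mul_apply, prod_eq_mul_tailProd, tailProd_update_zero,
    mul_comm]

theorem tailMat_mulVec_injective {j : Fin m} (hrank : (coeffMat hr u j).rank = r) :
    Function.Injective (tailMat u j).mulVec := by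
  refine mulVec_injective_of_rank_eq _ (le_antisymm (rank_le_card_width _) ?_)
  calc Fintype.card (Fin r) = (coeffMat hr u j).rank := by rw [hrank, Fintype.card_fin]
    _ ≤ (tailMat u j).rank := by rw [coeffMat_eq_tailMat_mul]; exact rank_mul_le_left _ _

variable {F : TIdx m n → ℂ}

theorem apply_update_zero_eq_sum (hF : ∀ idx, F idx = ∑ s : Fin r, ∏ j : Fin m, u s j (idx j))
    (μ : TIdx m n) (x : Fin (n 0 + 1)) :
    F (Function.update μ 0 x) = ∑ s, u s 0 x * tailProd u s μ := by
  simp [hF, prod_eq_mul_tailProd, tailProd_update_zero]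

theorem gobj_residual_eq (hnorm : ∀ s, ∀ j : Fin m, j ≠ 0 → u s j 0 = 1)
    (hF : ∀ idx, F idx = ∑ s : Fin r, ∏ j : Fin m, u s j (idx j)) (g : Fin r → ℂ)
    (i : Fin r) {j : Fin m} (hj : j ≠ 0) (k : Fin (n j + 1)) {μ : TIdx m n} (hμ : μ j = 0) :
    (∑ ℓ, g ℓ * F (Function.update μ 0 (Fin.castLE hr ℓ))) -
        F (Function.update (Function.update μ 0 (Fin.castLE hr i)) j k) =
      ∑ s, ((firstModeMat hr u *ᵥ g) s - firstModeMat hr u s i * u s j k) * tailProd u s μ := by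
  rw [Function.update_comm hj.symm, apply_update_zero_eq_sum hF]
  simp only [apply_update_zero_eq_sum hF, tailProd_update hj _ (hμ ▸ hnorm _ j hj)]
  simp only [firstModeMat, mulVec, dotProduct, of_apply, sub_mul, sum_mul, mul_sum,
    sum_sub_distrib]
  rw [sum_comm]
  congr 1 <;> refine sum_congr rfl fun _ _ => ?_
  · exact sum_congr rfl fun _ _ => by ring
  · ring

variable (F) (G : Fin r → Fin r → (j : Fin m) → Fin (n j + 1) → ℂ)

theorem gobj_nonneg : 0 ≤ gobj hr F G := by
  unfold gobj
  positivity

theorem gobj_eq_zero_iff : gobj hr F G = 0 ↔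
    ∀ i, ∀ j : Fin m, j ≠ 0 → ∀ k : Fin (n j + 1), k ≠ 0 → ∀ μ : TIdx m n, μ 0 = 0 → μ j = 0 →
      (∑ ℓ : Fin r, G ℓ i j k * F (Function.update μ 0 (Fin.castLE hr ℓ))) -
        F (Function.update (Function.update μ 0 (Fin.castLE hr i)) j k) = 0 := by
  simp (disch := intros; positivity) [gobj, sum_eq_zero_iff_of_nonneg]

variable {F G}

theorem exists_gobj_eq_zero (hnorm : ∀ s, ∀ j : Fin m, j ≠ 0 → u s j 0 = 1)
    (hF : ∀ idx, F idx = ∑ s : Fin r, ∏ j : Fin m, u s j (idx j))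
    (hW : IsUnit (firstModeMat hr u)) :
    ∃ G : Fin r → Fin r → (j : Fin m) → Fin (n j + 1) → ℂ, gobj hr F G = 0 := by
  set W := firstModeMat hr u
  have hWW : W * W⁻¹ = 1 := mul_nonsing_inv W ((isUnit_iff_isUnit_det W).mp hW)
  refine ⟨fun ℓ i j k => (W⁻¹ *ᵥ fun s => W s i * u s j k) ℓ,
    (gobj_eq_zero_iff hr F _).mpr fun i j hj k _ μ _ hμ => ?_⟩
  rw [gobj_residual_eq hr hnorm hF _ i hj k hμ]
  simp [W, mulVec_mulVec, hWW]

theorem Mhat_mul_eq_of_gobj_eq_zero (hnorm : ∀ s, ∀ j : Fin m, j ≠ 0 → u s j 0 = 1)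
    (hF : ∀ idx, F idx = ∑ s : Fin r, ∏ j : Fin m, u s j (idx j))
    (hrank : ∀ j : Fin m, j ≠ 0 → (coeffMat hr u j).rank = r) (hG : gobj hr F G = 0) :
    ∀ j : Fin m, j ≠ 0 → ∀ k : Fin (n j + 1), k ≠ 0 →
      Mhat G j k * (firstModeMat hr u)ᵀ = (firstModeMat hr u)ᵀ * diagonal fun s => u s j k := by
  intro j hj k hk
  ext i s
  set W := firstModeMat hr u
  suffices h : (fun s => (W *ᵥ fun ℓ => G ℓ i j k) s - W s i * u s j k) = 0 by
    have := congrFun h s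
    simp only [mulVec, dotProduct, Pi.zero_apply, sub_eq_zero] at this
    rw [mul_diagonal, mul_apply, transpose_apply, ← this]
    simp [Mhat, mul_comm]
  refine tailMat_mulVec_injective hr (hrank j hj) ?_
  ext ⟨μ, hμ0, hμj⟩
  have := (gobj_eq_zero_iff hr F G).mp hG i j hj k hk μ hμ0 hμj
  rw [gobj_residual_eq hr hnorm hF _ i hj k hμj] at this
  simpa [tailMat, mulVec, dotProduct, mul_comm] using this

end

section

variable {m r : ℕ} [NeZero m] {n : Fin m → ℕ} {u : Fin r → (j : Fin m) → Fin (n j + 1) → ℂ}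
  {G : Fin r → Fin r → (j : Fin m) → Fin (n j + 1) → ℂ} {X : Matrix (Fin r) (Fin r) ℂ}

theorem sum_smul_Mhat_mul_eq {ξ : (j : Fin m) → Fin (n j + 1) → ℝ} (hξ1 : ∀ k, ξ 0 k = 0)
    (hξ2 : ∀ j, ξ j 0 = 0)
    (heig : ∀ j : Fin m, j ≠ 0 → ∀ k : Fin (n j + 1), k ≠ 0 →
      Mhat G j k * X = X * diagonal fun s => u s j k) :
    (∑ j : Fin m, ∑ k : Fin (n j + 1), (ξ j k : ℂ) • Mhat G j k) * X =
      X * diagonal fun s => ∑ j : Fin m, ∑ k : Fin (n j + 1), (ξ j k : ℂ) * u s j k := by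
  ext i s
  simp only [sum_mul, smul_mul, Matrix.sum_apply, Matrix.smul_apply, smul_eq_mul, mul_diagonal,
    mul_sum]
  refine sum_congr rfl fun j _ => sum_congr rfl fun k _ => ?_
  by_cases hj : j = 0
  · subst hj
    simp [hξ1]
  by_cases hk : k = 0
  · simp [hk, hξ2]
  rw [heig j hj k hk, mul_diagonal]
  ring

theorem exists_perm_vhat_eq (hnorm : ∀ s, ∀ j : Fin m, j ≠ 0 → u s j 0 = 1)
    (heig : ∀ j : Fin m, j ≠ 0 → ∀ k : Fin (n j + 1), k ≠ 0 →
      Mhat G j k * X = X * diagonal fun s => u s j k)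
    (hX : IsUnit X) {M : Matrix (Fin r) (Fin r) ℂ} {Λ : Fin r → ℂ} (hΛ : Function.Injective Λ)
    (hM : M * X = X * diagonal Λ) {Q T : Matrix (Fin r) (Fin r) ℂ}
    (hQ : Q ∈ unitaryGroup (Fin r) ℂ) (hT : T.BlockTriangular id) (hQT : Qᴴ * M * Q = T) :
    ∃ σ : Equiv.Perm (Fin r), ∀ t, ∀ j : Fin m, j ≠ 0 → vhat G Q t j = u (σ t) j := by
  have hQQ : Q * Qᴴ = 1 := mem_unitaryGroup_iff.mp hQ
  have hS : IsUnit (Qᴴ * X) := (IsUnit.of_mul_eq_one_right Q hQQ).mul hX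
  obtain ⟨σ, hσ⟩ := exists_perm_apply_self_eq_of_mul_eq_mul_diagonal hT hS hΛ
    (hQT ▸ mul_mul_mul_eq_of_mul_eq hQQ hM)
  refine ⟨σ, fun t j hj => funext fun k => ?_⟩
  by_cases hk : k = 0
  · simp [vhat, hk, hnorm _ j hj]
  · rw [vhat, if_neg hk]
    exact hσ _ _ (mul_mul_mul_eq_of_mul_eq hQQ (heig j hj k hk)) t

theorem sum_mul_prod_vhat_eq {F : TIdx m n → ℂ}
    (hF : ∀ idx, F idx = ∑ s : Fin r, ∏ j : Fin m, u s j (idx j)) {Q : Matrix (Fin r) (Fin r) ℂ}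
    {σ : Equiv.Perm (Fin r)} (hσ : ∀ t, ∀ j : Fin m, j ≠ 0 → vhat G Q t j = u (σ t) j) :
    (fun idx : TIdx m n => ∑ s : Fin r, u (σ s) 0 (idx 0) *
      ∏ j ∈ univ.filter (fun j : Fin m => j ≠ 0), vhat G Q s j (idx j)) = F := by
  funext idx
  have htail : ∀ s, ∏ j ∈ univ.filter (fun j : Fin m => j ≠ 0), vhat G Q s j (idx j) =
      tailProd u (σ s) idx := fun s => prod_congr rfl fun j hj => by
    rw [hσ s j (mem_filter.mp hj).2]
  simp only [htail, ← prod_eq_mul_tailProd, hF]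
  exact Equiv.sum_comp σ fun s => ∏ j, u s j (idx j)

end

theorem stmt16_general {m r : ℕ} [NeZero m] {n : Fin m → ℕ} (hr : r ≤ n 0 + 1)
    (u : Fin r → (j : Fin m) → Fin (n j + 1) → ℂ)
    (hnorm : ∀ s, ∀ j : Fin m, j ≠ 0 → u s j 0 = 1)
    (ξ : (j : Fin m) → Fin (n j + 1) → ℝ)
    (hξ1 : ∀ k, ξ 0 k = 0) (hξ2 : ∀ j, ξ j 0 = 0)
    (F : TIdx m n → ℂ)
    -- `ε = 0`: `F` equals the rank-`r` tensor `X^{bs}`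
    (hF : ∀ idx, F idx = ∑ s : Fin r, ∏ j : Fin m, u s j (idx j))
    -- (i) linear independence of the truncations and of the partial outer products
    (hli1 : LinearIndependent ℂ fun s : Fin r =>
      fun ℓ : Fin r => u s 0 (Fin.castLE hr ℓ))
    -- (ii) each `A[X^{bs}, j]` has full column rank
    (hrank : ∀ j : Fin m, j ≠ 0 →
      (Matrix.of fun (μ : {μ : TIdx m n // μ 0 = 0 ∧ μ j = 0}) (ℓ : Fin r) =>
        ∑ s : Fin r, ∏ j' : Fin m,
          u s j' (Function.update (μ : TIdx m n) 0 (Fin.castLE hr ℓ) j')).rank = r)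
    -- (iv) the weighted sums are pairwise distinct over `s`
    (hdist : Function.Injective fun s : Fin r =>
      ∑ j : Fin m, ∑ k : Fin (n j + 1), (ξ j k : ℂ) * u s j k) :
    -- Step 1: `G` minimizes the least squares (5.9)
    ∀ G : Fin r → Fin r → (j : Fin m) → Fin (n j + 1) → ℂ,
      (∀ G', gobj hr F G ≤ gobj hr F G') →
    -- Step 2: Schur decomposition of `M̂(ξ)`
    ∀ Q T : Matrix (Fin r) (Fin r) ℂ,
      Q ∈ Matrix.unitaryGroup (Fin r) ℂ → T.BlockTriangular id →
      Qᴴ * (∑ j : Fin m, ∑ k : Fin (n j + 1), (ξ j k : ℂ) • Mhat G j k) * Q = T →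
    -- Step 3: first-mode vectors by linear least squares
    ∀ v1 : Fin r → Fin (n 0 + 1) → ℂ,
      (∀ z : Fin r → Fin (n 0 + 1) → ℂ,
        tnorm (fun idx => (∑ s : Fin r, v1 s (idx 0) *
            ∏ j ∈ univ.filter (fun j : Fin m => j ≠ 0), vhat G Q s j (idx j)) - F idx) ≤
        tnorm (fun idx => (∑ s : Fin r, z s (idx 0) *
            ∏ j ∈ univ.filter (fun j : Fin m => j ≠ 0), vhat G Q s j (idx j)) - F idx)) →
    -- Conclusion: `X^{gp} = F`, a rank decomposition of `F`
    (fun idx : TIdx m n => ∑ s : Fin r, v1 s (idx 0) *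
        ∏ j ∈ univ.filter (fun j : Fin m => j ≠ 0), vhat G Q s j (idx j)) = F := by
  intro G hG Q T hQ hT hQT v1 hv1
  have hW : IsUnit (firstModeMat hr u) := linearIndependent_rows_iff_isUnit.mp hli1
  have hG0 : gobj hr F G = 0 := by
    obtain ⟨G₀, hG₀⟩ := exists_gobj_eq_zero hr hnorm hF hW
    exact le_antisymm (hG₀ ▸ hG G₀) (gobj_nonneg hr F G)
  have heig := Mhat_mul_eq_of_gobj_eq_zero hr hnorm hF hrank hG0
  obtain ⟨σ, hσ⟩ := exists_perm_vhat_eq hnorm heig ((isUnit_transpose _).mpr hW) hdist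
    (sum_smul_Mhat_mul_eq hξ1 hξ2 heig) hQ hT hQT
  exact eq_of_tnorm_sub_le (hv1 fun s => u (σ s) 0) (sum_mul_prod_vhat_eq hF hσ)

/-- Corollary 5.3: under the assumptions of Theorem 5.2, if `ε = 0`
(i.e. `F = X^{bs}` has rank `r`), then the tensor `X^{gp}` produced by
Algorithm 5.1 equals `F`, giving a rank decomposition of `F`. -/
theorem stmt16 {m r : ℕ} [NeZero m] {n : Fin m → ℕ} (hr : r ≤ n 0 + 1)
    (u : Fin r → (j : Fin m) → Fin (n j + 1) → ℂ)
    (hnorm : ∀ s, ∀ j : Fin m, j ≠ 0 → u s j 0 = 1)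
    (ξ : (j : Fin m) → Fin (n j + 1) → ℝ)
    (hξpos : ∀ (j : Fin m) (k : Fin (n j + 1)), j ≠ 0 → k ≠ 0 → 0 < ξ j k)
    (hξ1 : ∀ k, ξ 0 k = 0) (hξ2 : ∀ j, ξ j 0 = 0)
    (F : TIdx m n → ℂ)
    -- `ε = 0`: `F` equals the rank-`r` tensor `X^{bs}`
    (hF : ∀ idx, F idx = ∑ s : Fin r, ∏ j : Fin m, u s j (idx j))
    -- (i) linear independence of the truncations and of the partial outer products
    (hli1 : LinearIndependent ℂ fun s : Fin r =>
      fun ℓ : Fin r => u s 0 (Fin.castLE hr ℓ))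
    (hli2 : LinearIndependent ℂ fun s : Fin r => fun idx : TIdx m n =>
      ∏ j ∈ univ.filter (fun j : Fin m => j ≠ 0), u s j (idx j))
    -- (ii) each `A[X^{bs}, j]` has full column rank
    (hrank : ∀ j : Fin m, j ≠ 0 →
      (Matrix.of fun (μ : {μ : TIdx m n // μ 0 = 0 ∧ μ j = 0}) (ℓ : Fin r) =>
        ∑ s : Fin r, ∏ j' : Fin m,
          u s j' (Function.update (μ : TIdx m n) 0 (Fin.castLE hr ℓ) j')).rank = r)
    -- (iii) the tuple is scaling-optimal for `F`
    (hscal : ∀ y : Fin r → Fin (n 0 + 1) → ℂ,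
      tnorm (fun idx => F idx - ∑ s : Fin r, ∏ j : Fin m, u s j (idx j)) ≤
      tnorm (fun idx => F idx - ∑ s : Fin r, y s (idx 0) *
        ∏ j ∈ univ.filter (fun j : Fin m => j ≠ 0), u s j (idx j)))
    -- (iv) the weighted sums are pairwise distinct over `s`
    (hdist : Function.Injective fun s : Fin r =>
      ∑ j : Fin m, ∑ k : Fin (n j + 1), (ξ j k : ℂ) * u s j k) :
    -- Step 1: `G` minimizes the least squares (5.9)
    ∀ G : Fin r → Fin r → (j : Fin m) → Fin (n j + 1) → ℂ,
      (∀ G', gobj hr F G ≤ gobj hr F G') →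
    -- Step 2: Schur decomposition of `M̂(ξ)`
    ∀ Q T : Matrix (Fin r) (Fin r) ℂ,
      Q ∈ Matrix.unitaryGroup (Fin r) ℂ → T.BlockTriangular id →
      Qᴴ * (∑ j : Fin m, ∑ k : Fin (n j + 1), (ξ j k : ℂ) • Mhat G j k) * Q = T →
    -- Step 3: first-mode vectors by linear least squares
    ∀ v1 : Fin r → Fin (n 0 + 1) → ℂ,
      (∀ z : Fin r → Fin (n 0 + 1) → ℂ,
        tnorm (fun idx => (∑ s : Fin r, v1 s (idx 0) *
            ∏ j ∈ univ.filter (fun j : Fin m => j ≠ 0), vhat G Q s j (idx j)) - F idx) ≤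
        tnorm (fun idx => (∑ s : Fin r, z s (idx 0) *
            ∏ j ∈ univ.filter (fun j : Fin m => j ≠ 0), vhat G Q s j (idx j)) - F idx)) →
    -- Conclusion: `X^{gp} = F`, a rank decomposition of `F`
    (fun idx : TIdx m n => ∑ s : Fin r, v1 s (idx 0) *
        ∏ j ∈ univ.filter (fun j : Fin m => j ≠ 0), vhat G Q s j (idx j)) = F :=
  stmt16_general hr u hnorm ξ hξ1 hξ2 F hF hli1 hrank hdist

end
end
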